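/- In the rotating mirror model with p = 1 (every vertex has a mirror, which flips by 90° after each interaction with the light ray), the trajectory of the light ray is unbounded. -/

import Mathlib

/-- Directions of travel of the light ray. -/
inductive Dir | N | E | S | W
deriving DecidableEq

/-- Mirror designation at a vertex: no mirror, north-west mirror, or north-east mirror. -/
inductive Mirror | no | NW | NE
deriving DecidableEq

/-- Reflection of a direction by a mirror (no mirror: straight). -/
def reflect : Mirror → Dir → Dir
  | .no, d => d
  | .NW, .E => .N
  | .NW, .N => .E
  | .NW, .W => .S
  | .NW, .S => .W
  | .NE, .E => .S
  | .NE, .S => .E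
  | .NE, .W => .N
  | .NE, .N => .W

/-- One step in a direction on the cylinder `ℤ × ZMod m`. -/
def moveC {m : ℕ} (v : ℤ × ZMod m) : Dir → ℤ × ZMod m
  | .N => (v.1, v.2 + 1)
  | .S => (v.1, v.2 - 1)
  | .E => (v.1 + 1, v.2)
  | .W => (v.1 - 1, v.2)

/-- The step map of the mirror model on the cylinder: move one step, then reflect
at the mirror (if any) at the new vertex. -/
def stepC {m : ℕ} (c : ℤ × ZMod m → Mirror) (s : (ℤ × ZMod m) × Dir) :
    (ℤ × ZMod m) × Dir :=
  (moveC s.1 s.2, reflect (c (moveC s.1 s.2)) s.2)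
/-- One step in a direction on `ℤ × ℤ`. -/
def moveZ (v : ℤ × ℤ) : Dir → ℤ × ℤ
  | .N => (v.1, v.2 + 1)
  | .S => (v.1, v.2 - 1)
  | .E => (v.1 + 1, v.2)
  | .W => (v.1 - 1, v.2)

/-- The step map of the mirror model on `ℤ²`. -/
def stepZ (c : ℤ × ℤ → Mirror) (s : (ℤ × ℤ) × Dir) : (ℤ × ℤ) × Dir :=
  (moveZ s.1 s.2, reflect (c (moveZ s.1 s.2)) s.2)

/-- Reflection by a rotating mirror in one of its two states: `true` is a NE
mirror, `false` a NW mirror. -/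
def reflB (b : Bool) (d : Dir) : Dir :=
  reflect (if b then Mirror.NE else Mirror.NW) d

/-- The step map of the rotating mirror model at `p = 1`: every vertex of `ℤ²`
carries a mirror; the ray is reflected by the mirror at the vertex it reaches,
and that mirror then flips to its other state. -/
def stepR (s : ((ℤ × ℤ) × Dir) × ((ℤ × ℤ) → Bool)) :
    ((ℤ × ℤ) × Dir) × ((ℤ × ℤ) → Bool) :=
  ((moveZ s.1.1 s.1.2, reflB (s.2 (moveZ s.1.1 s.1.2)) s.1.2),
    Function.update s.2 (moveZ s.1.1 s.1.2) (! s.2 (moveZ s.1.1 s.1.2)))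

/- Auxiliary definitions and lemmas -/

instance : Fintype Dir :=
  ⟨⟨[Dir.N, Dir.E, Dir.S, Dir.W], by decide⟩, fun d => by cases d <;> decide⟩

def Dir.opp : Dir → Dir
  | .N => .S
  | .S => .N
  | .E => .W
  | .W => .E

lemma reflB_reflB (b : Bool) (d : Dir) : reflB b (reflB b d) = d := by
  cases b <;> cases d <;> rfl

lemma moveZ_opp (v : ℤ × ℤ) (d : Dir) : moveZ (moveZ v d) d.opp = v := by
  cases d <;> simp [moveZ, Dir.opp]

/-- Inverse of `stepR`. -/
def unstepR (s : ((ℤ × ℤ) × Dir) × ((ℤ × ℤ) → Bool)) :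
    ((ℤ × ℤ) × Dir) × ((ℤ × ℤ) → Bool) :=
  ((moveZ s.1.1 (Dir.opp (reflB (!(s.2 s.1.1)) s.1.2)), reflB (!(s.2 s.1.1)) s.1.2),
    Function.update s.2 s.1.1 (!(s.2 s.1.1)))

lemma unstep_step (s : ((ℤ × ℤ) × Dir) × ((ℤ × ℤ) → Bool)) :
    unstepR (stepR s) = s := by
  simp [unstepR, stepR, reflB_reflB, moveZ_opp, Function.update_self,
    Function.update_idem, Function.update_eq_self]

lemma stepR_inj : Function.Injective stepR :=
  Function.LeftInverse.injective unstep_step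

def posn (s₀ : ((ℤ × ℤ) × Dir) × ((ℤ × ℤ) → Bool)) (k : ℕ) : ℤ × ℤ :=
  (stepR^[k] s₀).1.1

def dirn (s₀ : ((ℤ × ℤ) × Dir) × ((ℤ × ℤ) → Bool)) (k : ℕ) : Dir :=
  (stepR^[k] s₀).1.2

def cfgn (s₀ : ((ℤ × ℤ) × Dir) × ((ℤ × ℤ) → Bool)) (k : ℕ) : (ℤ × ℤ) → Bool :=
  (stepR^[k] s₀).2

lemma posn_succ (s₀ : ((ℤ × ℤ) × Dir) × ((ℤ × ℤ) → Bool)) (k : ℕ) :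
    posn s₀ (k+1) = moveZ (posn s₀ k) (dirn s₀ k) := by
  unfold posn dirn
  rw [Function.iterate_succ_apply']
  rfl

lemma dirn_succ (s₀ : ((ℤ × ℤ) × Dir) × ((ℤ × ℤ) → Bool)) (k : ℕ) :
    dirn s₀ (k+1) = reflB (cfgn s₀ k (posn s₀ (k+1))) (dirn s₀ k) := by
  unfold posn dirn cfgn
  rw [Function.iterate_succ_apply']
  rfl

lemma cfgn_succ (s₀ : ((ℤ × ℤ) × Dir) × ((ℤ × ℤ) → Bool)) (k : ℕ) :
    cfgn s₀ (k+1) =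
      Function.update (cfgn s₀ k) (posn s₀ (k+1)) (!(cfgn s₀ k (posn s₀ (k+1)))) := by
  unfold posn cfgn
  rw [Function.iterate_succ_apply']
  rfl

/-- In the rotating mirror model with a mirror at every vertex, the trajectory
of the light ray is unbounded: it visits infinitely many vertices. -/
theorem rotating_mirrors_unbounded
    (s₀ : ((ℤ × ℤ) × Dir) × ((ℤ × ℤ) → Bool)) :
    Set.Infinite (Set.range fun k : ℕ => (stepR^[k] s₀).1.1) := by
  by_contra hfin
  rw [Set.not_infinite] at hfin
  have hmemV : ∀ k, posn s₀ k ∈ Set.range fun k : ℕ => (stepR^[k] s₀).1.1 :=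
    fun k => ⟨k, rfl⟩
  -- mirrors off the trajectory never change
  have cfg_off : ∀ x, (x ∉ Set.range fun k : ℕ => (stepR^[k] s₀).1.1) →
      ∀ k, cfgn s₀ k x = s₀.2 x := by
    intro x hx k
    induction k with
    | zero => rfl
    | succ k ih =>
      rw [cfgn_succ, Function.update_of_ne (fun h => hx (by rw [h]; exact hmemV (k+1)))]
      exact ih
  -- there is a repeated full state
  haveI : Finite ↥(Set.range fun k : ℕ => (stepR^[k] s₀).1.1) := hfin.to_subtype
  obtain ⟨i, j, hne, hij⟩ := Finite.exists_ne_map_eq_of_infinite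
    (fun k : ℕ => ((⟨posn s₀ k, hmemV k⟩, dirn s₀ k, fun x => cfgn s₀ k x.1) :
      ↥(Set.range fun k : ℕ => (stepR^[k] s₀).1.1) × Dir ×
        (↥(Set.range fun k : ℕ => (stepR^[k] s₀).1.1) → Bool)))
  have h1 : posn s₀ i = posn s₀ j := congrArg (fun p => (p.1 : ℤ × ℤ)) hij
  have h2 : dirn s₀ i = dirn s₀ j := congrArg (fun p => p.2.1) hij
  have h3 : cfgn s₀ i = cfgn s₀ j := by
    funext x
    by_cases hx : x ∈ Set.range fun k : ℕ => (stepR^[k] s₀).1.1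
    · exact congrFun (congrArg (fun p => p.2.2) hij) ⟨x, hx⟩
    · rw [cfg_off x hx i, cfg_off x hx j]
  have Teq : stepR^[i] s₀ = stepR^[j] s₀ := Prod.ext (Prod.ext h1 h2) h3
  obtain ⟨a, b, hab, hT⟩ : ∃ a b, a < b ∧ stepR^[a] s₀ = stepR^[b] s₀ := by
    rcases hne.lt_or_gt with h | h
    exacts [⟨i, j, h, Teq⟩, ⟨j, i, h, Teq.symm⟩]
  set p := b - a with hpdef
  have hp : 0 < p := by omega
  have hper : stepR^[p] s₀ = s₀ := by
    have h' : stepR^[a] (stepR^[p] s₀) = stepR^[a] s₀ := by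
      rw [← Function.iterate_add_apply]
      have : a + p = b := by omega
      rw [this, ← hT]
    exact stepR_inj.iterate a h'
  have hper' : ∀ k, stepR^[k + p] s₀ = stepR^[k] s₀ := fun k => by
    rw [Function.iterate_add_apply, hper]
  have hposper : ∀ k, posn s₀ (k + p) = posn s₀ k := fun k => by
    unfold posn; rw [hper']
  -- maximal visited vertex for x + y
  obtain ⟨M, hM, hmax⟩ := Set.Finite.exists_maximalFor (fun v : ℤ × ℤ => v.1 + v.2) _ hfin
    ⟨posn s₀ 0, hmemV 0⟩
  have hle : ∀ k : ℕ, (posn s₀ k).1 + (posn s₀ k).2 ≤ M.1 + M.2 := by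
    intro k
    by_contra h
    push_neg at h
    have : (posn s₀ k).1 + (posn s₀ k).2 ≤ M.1 + M.2 := hmax (hmemV k) (le_of_lt h)
    omega
  -- whenever the ray enters M, the mirror there must be NE (true)
  have hentry : ∀ k, posn s₀ (k+1) = M → cfgn s₀ k M = true := by
    intro k hk
    have e1 : moveZ (posn s₀ k) (dirn s₀ k) = M := (posn_succ s₀ k).symm.trans hk
    have e2 : dirn s₀ (k+1) = reflB (cfgn s₀ k M) (dirn s₀ k) := by
      rw [dirn_succ s₀ k, hk]
    have e3 : posn s₀ (k+2) = moveZ M (dirn s₀ (k+1)) := by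
      rw [posn_succ s₀ (k+1), hk]
    have l1 := hle k
    have l2 := hle (k+2)
    cases hb : cfgn s₀ k M with
    | true => rfl
    | false =>
      exfalso
      rw [hb] at e2
      cases hd : dirn s₀ k with
      | S =>
        rw [hd] at e1
        simp only [moveZ, Prod.ext_iff] at e1
        omega
      | W =>
        rw [hd] at e1
        simp only [moveZ, Prod.ext_iff] at e1
        omega
      | N =>
        rw [hd] at e2
        have : dirn s₀ (k+1) = Dir.E := e2
        rw [this] at e3
        simp only [moveZ, Prod.ext_iff] at e3
        omega
      | E =>
        rw [hd] at e2
        have : dirn s₀ (k+1) = Dir.N := e2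
        rw [this] at e3
        simp only [moveZ, Prod.ext_iff] at e3
        omega
  have hflip : ∀ k, posn s₀ (k+1) = M → cfgn s₀ (k+1) M = !(cfgn s₀ k M) := by
    intro k hk
    rw [cfgn_succ s₀ k, hk, Function.update_self]
  have hstay : ∀ k, posn s₀ (k+1) ≠ M → cfgn s₀ (k+1) M = cfgn s₀ k M := by
    intro k hk
    rw [cfgn_succ s₀ k, Function.update_of_ne (Ne.symm hk)]
  -- M is visited at some time t; set k₁ = t + p ≥ 1
  obtain ⟨t, ht⟩ := hM
  have ht' : posn s₀ t = M := ht
  have hk1 : posn s₀ (t + p) = M := by rw [hposper t]; exact ht'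
  have hk2 : posn s₀ (t + p + p) = M := by rw [hposper (t + p)]; exact hk1
  -- k₁ = t + p ≥ 1, write it as m + 1
  obtain ⟨m, hm⟩ : ∃ m, t + p = m + 1 := ⟨t + p - 1, by omega⟩
  have hcfgk1 : cfgn s₀ (t + p) M = false := by
    rw [hm] at hk1 ⊢
    rw [hflip m hk1, hentry m hk1]
    rfl
  -- find the next visit to M after t + p
  have hex : ∃ n, posn s₀ (t + p + 1 + n) = M := ⟨p - 1, by
    have : t + p + 1 + (p - 1) = t + p + p := by omega
    rw [this]; exact hk2⟩
  classical
  set N := Nat.find hex with hN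
  have hNvisit : posn s₀ (t + p + 1 + N) = M := Nat.find_spec hex
  have hNmin : ∀ n < N, posn s₀ (t + p + 1 + n) ≠ M := fun n hn => Nat.find_min hex hn
  -- mirror at M stays false from t+p up to t+p+N
  have hconst : ∀ n, n ≤ N → cfgn s₀ (t + p + n) M = false := by
    intro n hn
    induction n with
    | zero => exact hcfgk1
    | succ n ih =>
      have hne' : posn s₀ (t + p + n + 1) ≠ M := by
        have : t + p + n + 1 = t + p + 1 + n := by omega
        rw [this]
        exact hNmin n (by omega)
      rw [show t + p + (n + 1) = t + p + n + 1 from by omega,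
        hstay (t + p + n) hne']
      exact ih (by omega)
  have hlast : cfgn s₀ (t + p + N) M = false := hconst N le_rfl
  have : cfgn s₀ (t + p + N) M = true := by
    apply hentry
    have : t + p + N + 1 = t + p + 1 + N := by omega
    rw [this]
    exact hNvisit
  rw [this] at hlast
  simp at hlast
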